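/- arXiv:1912.13472 — 5 statements merged into one kernel-verified Lean document; each statement's English description precedes it below -/
import Mathlib

section
/- The map Λ : Symₙ(ℝ) → ℝⁿ sending a real symmetric n×n matrix to the vector of its eigenvalues listed in increasing order is globally Lipschitz continuous (with respect to the Frobenius norm on matrices and the Euclidean norm on ℝⁿ). -/
/-!
Weyl's inequality `λₖ(A) ≤ λₖ(B) + ‖A - B‖_F` for increasingly sorted eigenvalues: the span of
the eigenvectors of `A` belonging to its top `n - k` eigenvalues and the span of those of `B`
belonging to its bottom `k + 1` eigenvalues meet nontrivially by a dimension count. A common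
vector `x ≠ 0` has `λₖ(A)‖x‖² ≤ ⟪x, Ax⟫` and `⟪x, Bx⟫ ≤ λₖ(B)‖x‖²`, while Cauchy–Schwarz gives
`⟪x, (A - B)x⟫ ≤ ‖A - B‖_F ‖x‖²`. So every sorted eigenvalue is 1-Lipschitz, and the vector of
them is `√n`-Lipschitz.
-/

open Finset Submodule Module

open scoped RealInnerProductSpace

namespace OrthonormalBasis

variable {ι E : Type*} [Fintype ι] [NormedAddCommGroup E] [InnerProductSpace ℝ E]
  (b : OrthonormalBasis ι ℝ E)

lemma inner_eq_zero_of_mem_span_image {S : Set ι} {x : E} (hx : x ∈ span ℝ (b '' S)) {j : ι}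
    (hj : j ∉ S) : ⟪b j, x⟫ = 0 := by
  have hspan : span ℝ (b '' S) ≤ (ℝ ∙ b j)ᗮ := by
    refine span_le.2 ?_
    rintro _ ⟨i, hi, rfl⟩
    exact mem_orthogonal_singleton_iff_inner_right.2
      (b.orthonormal.2 (ne_of_mem_of_not_mem hi hj).symm)
  exact mem_orthogonal_singleton_iff_inner_right.1 (hspan hx)

lemma finrank_span_image (S : Finset ι) : finrank ℝ (span ℝ (b '' ↑S)) = #S := by
  rw [Set.image_eq_range, finrank_span_eq_card]
  · simp
  · exact b.orthonormal.linearIndependent.comp _ Subtype.val_injective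

variable {b} {T : E →ₗ[ℝ] E} {μ : ι → ℝ}

lemma inner_apply_eq_sum_mul_sq (hb : ∀ j, T (b j) = μ j • b j) (x : E) :
    ⟪x, T x⟫ = ∑ j, μ j * ⟪b j, x⟫ ^ 2 := by
  have hTx : T x = ∑ j, (μ j * ⟪b j, x⟫) • b j := by
    conv_lhs => rw [← b.sum_repr' x]
    simp only [map_sum, map_smul, hb, smul_smul, mul_comm]
  simp only [hTx, inner_sum, real_inner_smul_right, real_inner_comm x, mul_assoc, sq]

lemma mul_norm_sq_le_inner_apply (hb : ∀ j, T (b j) = μ j • b j) {S : Set ι} {x : E}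
    (hx : x ∈ span ℝ (b '' S)) {a : ℝ} (ha : ∀ j ∈ S, a ≤ μ j) : a * ‖x‖ ^ 2 ≤ ⟪x, T x⟫ := by
  rw [inner_apply_eq_sum_mul_sq hb, ← b.sum_sq_inner_right, mul_sum]
  refine sum_le_sum fun j _ => ?_
  by_cases hj : j ∈ S
  · exact mul_le_mul_of_nonneg_right (ha j hj) (sq_nonneg _)
  · simp [b.inner_eq_zero_of_mem_span_image hx hj]

lemma inner_apply_le_mul_norm_sq (hb : ∀ j, T (b j) = μ j • b j) {S : Set ι} {x : E}
    (hx : x ∈ span ℝ (b '' S)) {a : ℝ} (ha : ∀ j ∈ S, μ j ≤ a) : ⟪x, T x⟫ ≤ a * ‖x‖ ^ 2 := by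
  rw [inner_apply_eq_sum_mul_sq hb, ← b.sum_sq_inner_right, mul_sum]
  refine sum_le_sum fun j _ => ?_
  by_cases hj : j ∈ S
  · exact mul_le_mul_of_nonneg_right (ha j hj) (sq_nonneg _)
  · simp [b.inner_eq_zero_of_mem_span_image hx hj]

end OrthonormalBasis

lemma Submodule.exists_mem_inf_ne_zero_of_finrank_lt {K V : Type*} [DivisionRing K]
    [AddCommGroup V] [Module K V] [FiniteDimensional K V] {U W : Submodule K V}
    (h : finrank K V < finrank K U + finrank K W) : ∃ x ∈ U ⊓ W, x ≠ 0 := by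
  refine exists_mem_ne_zero_of_ne_bot fun hUW => h.not_ge ?_
  exact finrank_add_finrank_le_of_disjoint (disjoint_iff.2 hUW)

lemma eigenvalue_le_add_of_inner_sub_le {n : ℕ} {E : Type*} [NormedAddCommGroup E]
    [InnerProductSpace ℝ E] {T₁ T₂ : E →ₗ[ℝ] E} {b c : OrthonormalBasis (Fin n) ℝ E}
    {μ ν : Fin n → ℝ} (hμ : Monotone μ) (hν : Monotone ν) (hb : ∀ j, T₁ (b j) = μ j • b j)
    (hc : ∀ j, T₂ (c j) = ν j • c j) {C : ℝ} (hC : ∀ x, ⟪x, T₁ x - T₂ x⟫ ≤ C * ‖x‖ ^ 2)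
    (k : Fin n) : μ k ≤ ν k + C := by
  have : FiniteDimensional ℝ E := b.toBasis.finiteDimensional_of_finite
  obtain ⟨x, ⟨hxb, hxc⟩, hx0⟩ := exists_mem_inf_ne_zero_of_finrank_lt
    (U := span ℝ (b '' ↑(Ici k))) (W := span ℝ (c '' ↑(Iic k))) (by
      rw [b.finrank_span_image, c.finrank_span_image, finrank_eq_card_basis b.toBasis,
        Fin.card_Ici, Fin.card_Iic, Fintype.card_fin]
      omega)
  have h₁ : μ k * ‖x‖ ^ 2 ≤ ⟪x, T₁ x⟫ :=
    OrthonormalBasis.mul_norm_sq_le_inner_apply hb hxb fun j hj => hμ (by simpa using hj)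
  have h₂ : ⟪x, T₂ x⟫ ≤ ν k * ‖x‖ ^ 2 :=
    OrthonormalBasis.inner_apply_le_mul_norm_sq hc hxc fun j hj => hν (by simpa using hj)
  have hC' := hC x
  rw [inner_sub_right] at hC'
  have hk : μ k * ‖x‖ ^ 2 ≤ (ν k + C) * ‖x‖ ^ 2 := by linarith
  exact le_of_mul_le_mul_right hk (by positivity)

lemma EuclideanSpace.norm_le_sqrt_card_mul {ι : Type*} [Fintype ι] (x : EuclideanSpace ℝ ι)
    {r : ℝ} (hr : 0 ≤ r) (hx : ∀ i, |x i| ≤ r) : ‖x‖ ≤ √(Fintype.card ι) * r := by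
  rw [EuclideanSpace.norm_eq, ← Real.sqrt_sq hr, ← Real.sqrt_mul (Nat.cast_nonneg _)]
  gcongr
  calc ∑ i, ‖x i‖ ^ 2 ≤ ∑ _i : ι, r ^ 2 := by
        gcongr with i
        simpa using hx i
    _ = _ := by simp

namespace Matrix

variable {m ι : Type*} [Fintype m] [Fintype ι] [DecidableEq ι]

lemma norm_toEuclideanLin_apply_le (M : Matrix m ι ℝ) (x : EuclideanSpace ℝ ι) :
    ‖toEuclideanLin M x‖ ≤ √(∑ i, ∑ j, M i j ^ 2) * ‖x‖ := by
  rw [← Real.sqrt_sq (norm_nonneg x), ← Real.sqrt_mul (by positivity)]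
  refine Real.le_sqrt_of_sq_le ?_
  rw [EuclideanSpace.real_norm_sq_eq, EuclideanSpace.real_norm_sq_eq, sum_mul]
  gcongr with i
  exact sum_mul_sq_le_sq_mul_sq _ _ _

lemma inner_toEuclideanLin_apply_le (M : Matrix ι ι ℝ) (x : EuclideanSpace ℝ ι) :
    ⟪x, toEuclideanLin M x⟫ ≤ √(∑ i, ∑ j, M i j ^ 2) * ‖x‖ ^ 2 :=
  calc ⟪x, toEuclideanLin M x⟫ ≤ ‖x‖ * ‖toEuclideanLin M x‖ := real_inner_le_norm _ _
    _ ≤ ‖x‖ * (√(∑ i, ∑ j, M i j ^ 2) * ‖x‖) := by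
        gcongr; exact norm_toEuclideanLin_apply_le M x
    _ = √(∑ i, ∑ j, M i j ^ 2) * ‖x‖ ^ 2 := by ring

lemma IsHermitian.toEuclideanLin_eigenvectorBasis {A : Matrix ι ι ℝ}
    (hA : A.IsHermitian) (j : ι) :
    toEuclideanLin A (hA.eigenvectorBasis j) = hA.eigenvalues j • hA.eigenvectorBasis j := by
  ext i
  simpa using congrFun (hA.mulVec_eigenvectorBasis j) i

end Matrix

namespace Matrix.IsHermitian

variable {n : ℕ} {A B : Matrix (Fin n) (Fin n) ℝ}

noncomputable def sortedEigenvalues (hA : A.IsHermitian) : Fin n → ℝ :=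
  hA.eigenvalues ∘ Tuple.sort hA.eigenvalues

lemma monotone_sortedEigenvalues (hA : A.IsHermitian) : Monotone hA.sortedEigenvalues :=
  Tuple.monotone_sort _

lemma sortedEigenvalues_le_add (hA : A.IsHermitian) (hB : B.IsHermitian) (k : Fin n) :
    hA.sortedEigenvalues k ≤ hB.sortedEigenvalues k + √(∑ i, ∑ j, (A i j - B i j) ^ 2) := by
  refine eigenvalue_le_add_of_inner_sub_le (T₁ := toEuclideanLin A) (T₂ := toEuclideanLin B)
    (b := hA.eigenvectorBasis.reindex (Tuple.sort hA.eigenvalues).symm)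
    (c := hB.eigenvectorBasis.reindex (Tuple.sort hB.eigenvalues).symm)
    hA.monotone_sortedEigenvalues hB.monotone_sortedEigenvalues (fun j => ?_) (fun j => ?_)
    (fun x => ?_) k
  · simpa [sortedEigenvalues] using hA.toEuclideanLin_eigenvectorBasis _
  · simpa [sortedEigenvalues] using hB.toEuclideanLin_eigenvectorBasis _
  · rw [← LinearMap.sub_apply, ← map_sub]
    exact inner_toEuclideanLin_apply_le (A - B) x

lemma abs_sortedEigenvalues_sub_le (hA : A.IsHermitian) (hB : B.IsHermitian) (k : Fin n) :
    |hA.sortedEigenvalues k - hB.sortedEigenvalues k| ≤ √(∑ i, ∑ j, (A i j - B i j) ^ 2) := by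
  have hBA := hB.sortedEigenvalues_le_add hA k
  simp_rw [← neg_sub (A _ _), neg_sq] at hBA
  rw [abs_sub_le_iff]
  constructor <;> linarith [hA.sortedEigenvalues_le_add hB k]

end Matrix.IsHermitian

/-- The map sending a real symmetric (hermitian) `n × n` matrix to the vector of its
eigenvalues listed in increasing order is globally Lipschitz with respect to the
Frobenius norm on matrices and the Euclidean norm on `ℝⁿ`. -/
theorem eigenvalue_map_lipschitz (n : ℕ) :
    ∃ (Λ : {A : Matrix (Fin n) (Fin n) ℝ // A.IsHermitian} → EuclideanSpace ℝ (Fin n))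
      (K : ℝ), 0 ≤ K ∧
      (∀ A, Monotone (Λ A)) ∧
      (∀ A, ∃ σ : Equiv.Perm (Fin n), ∀ i, Λ A i = A.2.eigenvalues (σ i)) ∧
      (∀ A B, ‖Λ A - Λ B‖ ≤
        K * Real.sqrt (∑ i, ∑ j, (A.1 i j - B.1 i j) ^ 2)) := by
  refine ⟨fun A => WithLp.toLp 2 A.2.sortedEigenvalues, √n, Real.sqrt_nonneg _,
    fun A => A.2.monotone_sortedEigenvalues, fun A => ⟨Tuple.sort A.2.eigenvalues, fun _ => rfl⟩,
    fun A B => ?_⟩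
  simpa using EuclideanSpace.norm_le_sqrt_card_mul (WithLp.toLp 2 A.2.sortedEigenvalues -
    WithLp.toLp 2 B.2.sortedEigenvalues) (Real.sqrt_nonneg _) (A.2.abs_sortedEigenvalues_sub_le B.2)
end

section
/- Let X_1,…,X_n be fixed real symmetric d×d matrices, 𝒜 ⊆ ℝ a finite set, and m ≥ n+1. Then there exists a Lebesgue-null set 𝒞 ⊆ ℝᵐ such that for all λ = (λ_1,…,λ_m) ∉ 𝒞, all z ∈ ℝⁿ, and all A ∈ 𝒜^{n×m}, at least one of the matrices M_j = −Σ_{i=1}^n z_i X_i A_{ij} + λ_j I_d (j ∈ [m]) is nonsingular. -/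
/-!
Fix `A` and put `Sⱼ z = ∑ᵢ zᵢ Aᵢⱼ Xᵢ`. If every `Mⱼ` is singular, then `λ` lies in the product
`∏ⱼ spec (Sⱼ z)`. The `Sⱼ` are symmetric and Lipschitz in `z`, and an eigenvector of `B` shows
that every eigenvalue of `B` lies within `‖B - B'‖` of the spectrum of a symmetric `B'`. So the
products over a set of parameters `z` of diameter `r` lie in at most `dᵐ` cubes of side `O(r)`,
of total volume `O(rᵐ)`. Since `m > n`, the `m`-dimensional Hausdorff measure of `ℝⁿ` vanishes:
`ℝⁿ` has covers with `∑ rᵢᵐ` arbitrarily small, so the union of all products is null. There are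
only finitely many `A`.
-/

open MeasureTheory Finset Metric
open scoped ENNReal NNReal RealInnerProductSpace Matrix.Norms.L2Operator

theorem measure_biUnion_eq_zero_of_hausdorffMeasure_eq_zero {X Y : Type*} [EMetricSpace X]
    [MeasurableSpace X] [BorelSpace X] [MeasurableSpace Y] (μ : Measure Y) (F : X → Set Y)
    {C : ℝ≥0∞} (hC : C ≠ ∞) {d : ℝ} {r : ℝ≥0∞} (hr : 0 < r)
    (hF : ∀ t : Set X, ediam t ≤ r → μ (⋃ x ∈ t, F x) ≤ C * ediam t ^ d)
    {s : Set X} (hs : μH[d] s = 0) : μ (⋃ x ∈ s, F x) = 0 := by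
  let ν : OuterMeasure X :=
    { measureOf := fun t => μ (⋃ x ∈ t, F x)
      empty := by simp
      mono := fun h => measure_mono (Set.biUnion_subset_biUnion_left h)
      iUnion_nat := fun t _ => by
        simp only [Set.biUnion_iUnion]
        exact measure_iUnion_le _ }
  -- `C + 1` rather than `C`: comparing `mkMetric`s needs a nonzero constant.
  have hν : ν ≤ OuterMeasure.mkMetric fun ρ => (C + 1) * ρ ^ d :=
    OuterMeasure.le_mkMetric _ ν r hr fun t ht =>
      (hF t ht).trans (mul_le_mul_left le_self_add _)
  have hsmul : (OuterMeasure.mkMetric fun ρ => (C + 1) * ρ ^ d : OuterMeasure X) ≤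
      (C + 1) • OuterMeasure.mkMetric fun ρ => ρ ^ d :=
    OuterMeasure.mkMetric_mono_smul (by simpa using hC) (by simp)
      (Filter.Eventually.of_forall fun _ => le_rfl)
  refine le_antisymm ?_ zero_le
  calc μ (⋃ x ∈ s, F x) = ν s := rfl
    _ ≤ (C + 1) * μH[d] s := by
      have := (hν.trans hsmul) s
      rwa [smul_apply, OuterMeasure.coe_mkMetric, smul_eq_mul] at this
    _ = 0 := by rw [hs, mul_zero]

theorem volume_biUnion_pi_le {E ι : Type*} [PseudoMetricSpace E] [Fintype ι]
    (σ : E → ι → Finset ℝ) {k : ℕ} (hk : ∀ x j, (σ x j).card ≤ k) {K : ℝ≥0}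
    (hσ : ∀ x x' j, ∀ μ ∈ σ x j, ∃ ν ∈ σ x' j, dist μ ν ≤ K * dist x x')
    {t : Set E} (ht : Bornology.IsBounded t) :
    volume (⋃ x ∈ t, Set.univ.pi fun j => (σ x j : Set ℝ)) ≤
      ENNReal.ofReal (2 * k * K * diam t) ^ Fintype.card ι := by
  rcases t.eq_empty_or_nonempty with rfl | ⟨x₀, hx₀⟩
  · simp
  have hcover : (⋃ x ∈ t, Set.univ.pi fun j => (σ x j : Set ℝ)) ⊆
      Set.univ.pi fun j => ⋃ μ ∈ σ x₀ j, closedBall μ (K * diam t) := by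
    simp only [Set.iUnion_subset_iff]
    intro x hx y hy j _
    obtain ⟨ν, hν, hdist⟩ := hσ x x₀ j (y j) (hy j trivial)
    refine Set.mem_biUnion hν (hdist.trans ?_)
    exact mul_le_mul_of_nonneg_left (dist_le_diam_of_mem ht hx hx₀) K.coe_nonneg
  have hfactor : ∀ j, volume (⋃ μ ∈ σ x₀ j, closedBall μ (K * diam t)) ≤
      ENNReal.ofReal (2 * k * K * diam t) := fun j =>
    calc volume (⋃ μ ∈ σ x₀ j, closedBall μ (K * diam t))
        ≤ ∑ μ ∈ σ x₀ j, volume (closedBall μ (K * diam t)) := measure_biUnion_finset_le _ _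
      _ = (σ x₀ j).card * ENNReal.ofReal (2 * (K * diam t)) := by
        simp [Real.volume_closedBall]
      _ ≤ k * ENNReal.ofReal (2 * (K * diam t)) := by gcongr; exact hk x₀ j
      _ = ENNReal.ofReal (2 * k * K * diam t) := by
        rw [← ENNReal.ofReal_natCast, ← ENNReal.ofReal_mul (by positivity)]
        ring_nf
  calc volume (⋃ x ∈ t, Set.univ.pi fun j => (σ x j : Set ℝ))
      ≤ ∏ j, volume (⋃ μ ∈ σ x₀ j, closedBall μ (K * diam t)) := by
        rw [← volume_pi_pi]; exact measure_mono hcover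
    _ ≤ ∏ _j : ι, ENNReal.ofReal (2 * k * K * diam t) := prod_le_prod' fun j _ => hfactor j
    _ = _ := by rw [prod_const, card_univ]

theorem volume_iUnion_pi_eq_zero {E ι : Type*} [NormedAddCommGroup E] [NormedSpace ℝ E]
    [FiniteDimensional ℝ E] [MeasurableSpace E] [BorelSpace E] [Fintype ι]
    (hE : Module.finrank ℝ E < Fintype.card ι)
    (σ : E → ι → Finset ℝ) {k : ℕ} (hk : ∀ x j, (σ x j).card ≤ k) {K : ℝ≥0}
    (hσ : ∀ x x' j, ∀ μ ∈ σ x j, ∃ ν ∈ σ x' j, dist μ ν ≤ K * dist x x') :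
    volume (⋃ x, Set.univ.pi fun j => (σ x j : Set ℝ)) = 0 := by
  have hnull : μH[Fintype.card ι] (Set.univ : Set E) = 0 := by
    rw [Real.hausdorffMeasure_of_finrank_lt (by exact_mod_cast hE)]; rfl
  have hbound : ∀ t : Set E, ediam t ≤ 1 →
      volume (⋃ x ∈ t, Set.univ.pi fun j => (σ x j : Set ℝ)) ≤
        ENNReal.ofReal (2 * k * K) ^ Fintype.card ι * ediam t ^ (Fintype.card ι : ℝ) := by
    intro t ht
    have hdiam : ediam t ≠ ∞ := (ht.trans_lt ENNReal.one_lt_top).ne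
    refine (volume_biUnion_pi_le σ hk hσ (isBounded_iff_ediam_ne_top.mpr hdiam)).trans_eq ?_
    rw [ENNReal.rpow_natCast, ← mul_pow, ENNReal.ofReal_mul (by positivity), diam,
      ENNReal.ofReal_toReal hdiam]
  simpa using measure_biUnion_eq_zero_of_hausdorffMeasure_eq_zero volume _
    (ENNReal.pow_ne_top ENNReal.ofReal_ne_top) zero_lt_one hbound hnull

theorem LinearMap.IsSymmetric.exists_mem_spectrum_abs_sub_mul_norm_le {E : Type*}
    [NormedAddCommGroup E] [InnerProductSpace ℝ E] [FiniteDimensional ℝ E] {T : E →ₗ[ℝ] E}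
    (hT : T.IsSymmetric) (μ : ℝ) {v : E} (hv : v ≠ 0) :
    ∃ ν ∈ spectrum ℝ T, |μ - ν| * ‖v‖ ≤ ‖μ • v - T v‖ := by
  have : Nontrivial E := nontrivial_of_ne v 0 hv
  set e := hT.eigenvectorBasis rfl
  set eig := hT.eigenvalues rfl
  obtain ⟨i₀, -, hmin⟩ := exists_min_image univ (fun i => |μ - eig i|)
    (univ_nonempty_iff.mpr (Fin.pos_iff_nonempty.mp Module.finrank_pos))
  refine ⟨eig i₀, (hT.hasEigenvalue_eigenvalues rfl i₀).mem_spectrum, ?_⟩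
  have hcoord : ∀ i, ⟪e i, μ • v - T v⟫ = (μ - eig i) * ⟪e i, v⟫ := fun i => by
    rw [inner_sub_right, real_inner_smul_right, ← hT, hT.apply_eigenvectorBasis,
      real_inner_smul_left, RCLike.ofReal_real_eq_id, id_eq]
    ring
  have hsq : (|μ - eig i₀| * ‖v‖) ^ 2 ≤ ‖μ • v - T v‖ ^ 2 := by
    rw [mul_pow, ← e.sum_sq_norm_inner_right v, ← e.sum_sq_norm_inner_right (μ • v - T v),
      mul_sum]
    refine sum_le_sum fun i _ => ?_
    rw [hcoord, norm_mul, mul_pow]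
    gcongr
    exact hmin i (mem_univ i)
  exact (pow_le_pow_iff_left₀ (by positivity) (norm_nonneg _) two_ne_zero).mp hsq

theorem Matrix.IsHermitian.exists_mem_spectrum_dist_le {n : Type*} [Fintype n] [DecidableEq n]
    {A B : Matrix n n ℝ} (hB : B.IsHermitian) {μ : ℝ} (hμ : μ ∈ spectrum ℝ A) :
    ∃ ν ∈ spectrum ℝ B, dist μ ν ≤ ‖A - B‖ := by
  rw [← Matrix.spectrum_toLpLin 2, ← Module.End.hasEigenvalue_iff_mem_spectrum] at hμ
  obtain ⟨v, hv⟩ := hμ.exists_hasEigenvector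
  obtain ⟨ν, hν, hle⟩ := (Matrix.isSymmetric_toEuclideanLin_iff.mpr hB)
    |>.exists_mem_spectrum_abs_sub_mul_norm_le μ hv.2
  refine ⟨ν, by rwa [← Matrix.spectrum_toLpLin 2], ?_⟩
  have hAB : μ • v - Matrix.toEuclideanLin B v = Matrix.toEuclideanLin (A - B) v := by
    rw [map_sub, LinearMap.sub_apply, hv.apply_eq_smul]
  have hop := (LinearMap.toContinuousLinearMap (Matrix.toEuclideanLin (A - B))).le_opNorm v
  rw [Real.dist_eq]
  exact le_of_mul_le_mul_right (hle.trans (hAB ▸ hop)) (norm_pos_iff.mpr hv.2)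

theorem volume_iUnion_pi_spectrum_eq_zero {E ι n : Type*} [NormedAddCommGroup E]
    [NormedSpace ℝ E] [FiniteDimensional ℝ E] [MeasurableSpace E] [BorelSpace E] [Fintype ι]
    [Fintype n] [DecidableEq n] (hE : Module.finrank ℝ E < Fintype.card ι)
    (M : E → ι → Matrix n n ℝ) (hM : ∀ x j, (M x j).IsHermitian) {K : ℝ≥0}
    (hMK : LipschitzWith K M) :
    volume (⋃ x, Set.univ.pi fun j => spectrum ℝ (M x j)) = 0 := by
  have hσ : ∀ x j, spectrum ℝ (M x j) = ↑(univ.image (hM x j).eigenvalues) := fun x j => by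
    simp [(hM x j).spectrum_real_eq_range_eigenvalues]
  simp_rw [hσ]
  refine volume_iUnion_pi_eq_zero hE _ (k := Fintype.card n)
    (fun x j => card_image_le.trans_eq card_univ) (K := K) fun x x' j μ hμ => ?_
  rw [← Finset.mem_coe, ← hσ] at hμ
  obtain ⟨ν, hν, hdist⟩ := (hM x' j).exists_mem_spectrum_dist_le hμ
  refine ⟨ν, by rwa [← Finset.mem_coe, ← hσ], hdist.trans ?_⟩
  rw [← dist_eq_norm]
  exact (dist_le_pi_dist (M x) (M x') j).trans (hMK.dist_le_mul x x')

theorem exists_lipschitzWith_sum_mul_smul {ι κ V : Type*} [Fintype ι] [Fintype κ]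
    [NormedAddCommGroup V] [NormedSpace ℝ V] (A : ι → κ → ℝ) (X : ι → V) :
    ∃ K, LipschitzWith K fun (z : ι → ℝ) j => ∑ i, (z i * A i j) • X i := by
  let Φ : (ι → ℝ) →ₗ[ℝ] κ → V :=
    LinearMap.pi fun j => Fintype.linearCombination ℝ fun i => A i j • X i
  have hΦ : ⇑(LinearMap.toContinuousLinearMap Φ) = fun z j => ∑ i, (z i * A i j) • X i := by
    ext z j
    simp [Φ, Fintype.linearCombination_apply, mul_smul]
  exact ⟨_, hΦ ▸ (LinearMap.toContinuousLinearMap Φ).lipschitz⟩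

theorem Matrix.mem_spectrum_of_det_neg_add_smul_one_eq_zero {n K : Type*} [Fintype n]
    [DecidableEq n] [Field K] {M : Matrix n n K} {μ : K} (h : (-M + μ • 1).det = 0) :
    μ ∈ spectrum K M := by
  rw [Matrix.mem_spectrum_iff_isRoot_charpoly, Polynomial.IsRoot, Matrix.eval_charpoly, ← h]
  congr 1
  rw [neg_add_eq_sub, Matrix.scalar_apply, Matrix.smul_one_eq_diagonal]

/-- Let `X_1,…,X_n` be fixed real symmetric `d × d` matrices, `𝒜 ⊆ ℝ` finite and
`m ≥ n + 1`. Then there is a Lebesgue-null set `𝒞 ⊆ ℝᵐ` such that for all `λ ∉ 𝒞`,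
all `z ∈ ℝⁿ` and all `A ∈ 𝒜^{n×m}`, at least one of the matrices
`M_j = -∑_i z_i X_i A_{ij} + λ_j I_d` is nonsingular. -/
theorem exists_null_set_one_matrix_nonsingular {n m d : ℕ} (hm : n + 1 ≤ m)
    (X : Fin n → Matrix (Fin d) (Fin d) ℝ) (hX : ∀ i, (X i).IsSymm)
    (𝒜 : Finset ℝ) :
    ∃ 𝒞 : Set (Fin m → ℝ), volume 𝒞 = 0 ∧
      ∀ lam : Fin m → ℝ, lam ∉ 𝒞 →
        ∀ z : Fin n → ℝ, ∀ A : Fin n → Fin m → ℝ, (∀ i j, A i j ∈ 𝒜) →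
          ∃ j, (-(∑ i, (z i * A i j) • X i) + lam j • (1 : Matrix (Fin d) (Fin d) ℝ)).det ≠ 0 := by
  let M (A : Fin n → Fin m → ℝ) (z : Fin n → ℝ) (j : Fin m) := ∑ i, (z i * A i j) • X i
  have hM : ∀ A z j, (M A z j).IsHermitian := fun A z j =>
    Matrix.isHermitian_iff_isSymm.mpr <| sum_induction _ Matrix.IsSymm
      (fun _ _ => Matrix.IsSymm.add) Matrix.isSymm_zero fun i _ => (hX i).smul _
  let 𝒜ₙₘ := Fintype.piFinset fun _ : Fin n => Fintype.piFinset fun _ : Fin m => 𝒜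
  refine ⟨⋃ A ∈ (𝒜ₙₘ : Set _), ⋃ z, Set.univ.pi fun j => spectrum ℝ (M A z j), ?_, ?_⟩
  · refine (measure_biUnion_null_iff 𝒜ₙₘ.countable_toSet).mpr fun A _ => ?_
    obtain ⟨K, hK⟩ := exists_lipschitzWith_sum_mul_smul A X
    exact volume_iUnion_pi_spectrum_eq_zero (by simpa using hm) (M A) (hM A) hK
  · intro lam hlam z A hA
    by_contra! hdet
    refine hlam (Set.mem_biUnion (by simpa [𝒜ₙₘ] using hA) (Set.mem_iUnion.mpr ⟨z, ?_⟩))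
    exact fun j _ => Matrix.mem_spectrum_of_det_neg_add_smul_one_eq_zero (hdet j)
end

section
/- Let z_1,…,z_n ∈ ℝᵈ, 𝒜 a finite subset of ℝ, and m > dn. For each fixed A ∈ 𝒜^{n×m} there is a Lebesgue-null set 𝒞(A) ⊆ ℝᵐ such that for every λ ∉ 𝒞(A) and every choice of vectors z_1,…,z_n ∈ ℝᵈ, at least one of the matrices M_j = −Σ_{i=1}^n z_i z_iᵀ A_{ij} + λ_j I_d is nonsingular. -/
/-!
If `M_j` is singular for every `j`, then each `λ_j` is an eigenvalue of the symmetric matrix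
`S_j(z) = ∑ i, A i j • z_i z_iᵀ`, so `λ` lies in the finite set `E(z)` of tuples of eigenvalues of
`S_1(z), …, S_m(z)`. Eigenvalues of symmetric operators move by at most the operator norm of a
perturbation and `z ↦ S_j(z)` is polynomial, so on bounded sets `E(z)` moves in a Lipschitz way
with `z`. Covering a ball of `ℝ^{dn}` by `O(t^{dn})` balls of radius `1/t` therefore covers the
corresponding part of `⋃_z E(z)` by `O(t^{dn})` cubes of side `O(1/t)` in `ℝᵐ`, of total volume
`O(t^{dn - m}) → 0`.
-/

open MeasureTheory Finset Module Metric Matrix Filter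
open scoped InnerProductSpace NNReal Topology

section Covering

variable {ι : Type*} [Fintype ι]

theorem exists_finset_closedBall_cover_card_le (R t : ℕ) (ht : 0 < t) :
    ∃ G : Finset (ι → ℝ), (G : Set (ι → ℝ)) ⊆ closedBall 0 R ∧
      #G ≤ ((2 * R + 1) * t) ^ Fintype.card ι ∧
      closedBall 0 R ⊆ ⋃ g ∈ G, closedBall g (1 / t) := by
  classical
  have ht' : (0 : ℝ) < t := by exact_mod_cast ht
  set I : Finset ℤ := Icc (-(R * t : ℤ)) (R * t)
  refine ⟨(Fintype.piFinset fun _ : ι => I).image fun g i => (g i : ℝ) / t, ?_, ?_, ?_⟩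
  · intro x hx
    simp only [coe_image, Set.mem_image, SetLike.mem_coe, Fintype.mem_piFinset, I, mem_Icc] at hx
    obtain ⟨g, hg, rfl⟩ := hx
    refine mem_closedBall_zero_iff.2 ((pi_norm_le_iff_of_nonneg R.cast_nonneg).2 fun i => ?_)
    rw [Real.norm_eq_abs, abs_div, abs_of_pos ht', div_le_iff₀ ht', abs_le]
    exact_mod_cast hg i
  · calc _ ≤ #(Fintype.piFinset fun _ : ι => I) := card_image_le
      _ = (2 * R * t + 1) ^ Fintype.card ι := by
        simp only [Fintype.card_piFinset, prod_const, card_univ, I, Int.card_Icc]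
        rw [show (R * t + 1 - -(R * t) : ℤ) = ((2 * R * t + 1 : ℕ) : ℤ) by push_cast; ring,
          Int.toNat_natCast]
      _ ≤ ((2 * R + 1) * t) ^ Fintype.card ι := by gcongr; nlinarith
  · intro x hx
    have hx' := (pi_norm_le_iff_of_nonneg R.cast_nonneg).1 (mem_closedBall_zero_iff.1 hx)
    refine Set.mem_biUnion (x := fun i => (⌊x i * t⌋ : ℝ) / t) ?_ ?_
    · refine mem_image.2 ⟨fun i => ⌊x i * t⌋, Fintype.mem_piFinset.2 fun i => ?_, rfl⟩
      have hxi := abs_le.1 (hx' i)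
      refine mem_Icc.2 ⟨Int.le_floor.2 ?_, Int.floor_le_iff.2 ?_⟩ <;> push_cast <;> nlinarith
    · refine mem_closedBall.2 ((dist_pi_le_iff (by positivity)).2 fun i => ?_)
      have hfract : x i - ⌊x i * t⌋ / t = Int.fract (x i * t) / t := by
        rw [Int.fract, sub_div, mul_div_cancel_right₀ _ ht'.ne']
      rw [Real.dist_eq, hfract, abs_div, abs_of_nonneg (Int.fract_nonneg _), abs_of_pos ht']
      gcongr
      exact (Int.fract_lt_one _).le

theorem volume_eq_zero_of_forall_cover_card_le {s : Set (ι → ℝ)} {D : ℕ}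
    (hD : D < Fintype.card ι) (C c : ℝ) (hc : 0 ≤ c)
    (hcover : ∀ t : ℕ, 0 < t → ∃ P : Finset (ι → ℝ),
      (#P : ℝ) ≤ C * t ^ D ∧ s ⊆ ⋃ p ∈ P, closedBall p (c / t)) :
    volume s = 0 := by
  have hbound : ∀ t : ℕ, 0 < t →
      volume s ≤ ENNReal.ofReal (C * (2 * c) ^ Fintype.card ι / t ^ (Fintype.card ι - D)) := by
    intro t ht
    obtain ⟨P, hcard, hsP⟩ := hcover t ht
    have ht' : (0 : ℝ) < t := by exact_mod_cast ht
    calc volume s ≤ ∑ p ∈ P, volume (closedBall p (c / t)) :=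
          (measure_mono hsP).trans (measure_biUnion_finset_le P _)
      _ = ENNReal.ofReal (#P * (2 * (c / t)) ^ Fintype.card ι) := by
          simp only [Real.volume_pi_closedBall _ (by positivity : 0 ≤ c / t), sum_const,
            nsmul_eq_mul, ENNReal.ofReal_mul (Nat.cast_nonneg _), ENNReal.ofReal_natCast]
      _ ≤ ENNReal.ofReal (C * t ^ D * (2 * (c / t)) ^ Fintype.card ι) := by gcongr
      _ = ENNReal.ofReal (C * (2 * c) ^ Fintype.card ι / t ^ (Fintype.card ι - D)) := by
          congr 1
          rw [eq_div_iff (by positivity), mul_div_assoc', div_pow]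
          field_simp
          rw [← Nat.add_sub_cancel' hD.le, pow_add, Nat.add_sub_cancel_left]
          ring
  have hlim : Tendsto (fun t : ℕ =>
      ENNReal.ofReal (C * (2 * c) ^ Fintype.card ι / t ^ (Fintype.card ι - D))) atTop (𝓝 0) := by
    rw [← ENNReal.ofReal_zero]
    exact ENNReal.tendsto_ofReal <| tendsto_const_nhds.div_atTop <|
      (tendsto_pow_atTop (Nat.sub_ne_zero_of_lt hD)).comp tendsto_natCast_atTop_atTop
  exact le_zero_iff.1 <| ge_of_tendsto hlim <| eventually_atTop.2 ⟨1, hbound⟩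

theorem volume_iUnion_eq_zero_of_locallyLipschitz_multifunction {κ : Type*} [Fintype κ]
    (hκι : Fintype.card κ < Fintype.card ι) (F : (κ → ℝ) → Finset (ι → ℝ)) (N : ℕ)
    (hN : ∀ z, #(F z) ≤ N)
    (hF : ∀ R : ℕ, ∃ L : ℝ≥0, ∀ z ∈ closedBall (0 : κ → ℝ) R, ∀ w ∈ closedBall (0 : κ → ℝ) R,
      ∀ y ∈ F z, ∃ p ∈ F w, dist y p ≤ L * dist z w) :
    volume (⋃ z, (F z : Set (ι → ℝ))) = 0 := by
  classical
  have hsub : ⋃ z, (F z : Set (ι → ℝ)) ⊆ ⋃ R : ℕ, ⋃ z ∈ closedBall (0 : κ → ℝ) R, (F z : Set _) :=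
    Set.iUnion_subset fun z => Set.subset_iUnion_of_subset ⌈‖z‖⌉₊ <|
      Set.subset_biUnion_of_mem (u := fun z => (F z : Set (ι → ℝ)))
        (mem_closedBall_zero_iff.2 (Nat.le_ceil _))
  refine measure_mono_null hsub <| measure_iUnion_null fun R => ?_
  obtain ⟨L, hL⟩ := hF R
  refine volume_eq_zero_of_forall_cover_card_le hκι (N * (2 * R + 1) ^ Fintype.card κ) L L.2
    fun t ht => ?_
  obtain ⟨G, hGR, hGcard, hcover⟩ := exists_finset_closedBall_cover_card_le (ι := κ) R t ht
  refine ⟨G.biUnion F, ?_, ?_⟩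
  · calc (#(G.biUnion F) : ℝ) ≤ #G * N := mod_cast card_biUnion_le_card_mul _ _ _ fun z _ => hN z
      _ ≤ ((2 * R + 1) * t) ^ Fintype.card κ * N := by gcongr; exact_mod_cast hGcard
      _ = _ := by rw [mul_pow]; ring
  · simp only [Set.iUnion_subset_iff]
    intro z hz y hy
    obtain ⟨g, hg, hzg⟩ := Set.mem_iUnion₂.1 (hcover hz)
    obtain ⟨p, hp, hyp⟩ := hL z hz g (hGR hg) y hy
    refine Set.mem_biUnion (mem_biUnion.2 ⟨g, hg, hp⟩) (mem_closedBall.2 (hyp.trans ?_))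
    rw [← mul_one_div]
    exact mul_le_mul_of_nonneg_left (mem_closedBall.1 hzg) L.2

end Covering

namespace LinearMap.IsSymmetric

variable {𝕜 E : Type*} [RCLike 𝕜] [NormedAddCommGroup E] [InnerProductSpace 𝕜 E]
  [FiniteDimensional 𝕜 E] {T : E →ₗ[𝕜] E} {n : ℕ}

theorem exists_norm_sub_eigenvalues_mul_le (hT : T.IsSymmetric) (hn : finrank 𝕜 E = n) (μ : 𝕜)
    {v : E} (hv : v ≠ 0) :
    ∃ k, ‖μ - hT.eigenvalues hn k‖ * ‖v‖ ≤ ‖T v - μ • v‖ := by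
  have : Nonempty (Fin n) := ⟨⟨0, hn ▸ finrank_pos_iff_exists_ne_zero.2 ⟨v, hv⟩⟩⟩
  obtain ⟨k, hk⟩ := Finite.exists_min fun k => ‖μ - hT.eigenvalues hn k‖
  refine ⟨k, (pow_le_pow_iff_left₀ (by positivity) (norm_nonneg _) two_ne_zero).1 ?_⟩
  set b := hT.eigenvectorBasis hn
  have hcoord : ∀ l, ⟪b l, T v - μ • v⟫_𝕜 = (hT.eigenvalues hn l - μ) * ⟪b l, v⟫_𝕜 := by
    intro l
    rw [inner_sub_right, inner_smul_right, ← hT, hT.apply_eigenvectorBasis, inner_smul_left,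
      RCLike.conj_ofReal, sub_mul]
  rw [mul_pow, ← b.sum_sq_norm_inner_right v, ← b.sum_sq_norm_inner_right, Finset.mul_sum]
  gcongr with l
  rw [hcoord, norm_mul, mul_pow, norm_sub_rev (hT.eigenvalues hn l : 𝕜)]
  gcongr
  exact hk l

theorem exists_norm_sub_eigenvalues_le_of_hasEigenvalue {T S : E →L[𝕜] E}
    (hT : (T : E →ₗ[𝕜] E).IsSymmetric) (hn : finrank 𝕜 E = n) {μ : 𝕜}
    (hμ : End.HasEigenvalue (S : E →ₗ[𝕜] E) μ) :
    ∃ k, ‖μ - hT.eigenvalues hn k‖ ≤ ‖S - T‖ := by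
  obtain ⟨v, hv⟩ := hμ.exists_hasEigenvector
  obtain ⟨k, hk⟩ := hT.exists_norm_sub_eigenvalues_mul_le hn μ hv.2
  refine ⟨k, le_of_mul_le_mul_right ?_ (norm_pos_iff.2 hv.2)⟩
  calc ‖μ - hT.eigenvalues hn k‖ * ‖v‖ ≤ ‖T v - S v‖ := by
        rwa [← End.mem_eigenspace_iff.1 hv.1] at hk
    _ ≤ ‖S - T‖ * ‖v‖ := by
        rw [norm_sub_rev, ← _root_.sub_apply]; exact (S - T).le_opNorm v

end LinearMap.IsSymmetric

theorem Matrix.hasEigenvalue_toEuclideanLin_of_det_eq_zero {κ 𝕜 : Type*} [Fintype κ]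
    [DecidableEq κ] [RCLike 𝕜] {M : Matrix κ κ 𝕜} {μ : 𝕜} (h : (μ • 1 - M).det = 0) :
    End.HasEigenvalue (toEuclideanLin M) μ := by
  obtain ⟨v, hv, hMv⟩ := exists_mulVec_eq_zero_iff.2 h
  rw [sub_mulVec, smul_mulVec, one_mulVec, sub_eq_zero] at hMv
  refine End.hasEigenvalue_of_hasEigenvector (x := WithLp.toLp 2 v) ⟨?_, by simpa using hv⟩
  rw [End.mem_eigenspace_iff, toLpLin_toLp, toLin'_apply, ← hMv, WithLp.toLp_smul]

section WeightedOuterSum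

variable {ι κ : Type*} [Fintype ι] [Fintype κ] [DecidableEq κ]

def weightedOuterSum (a : ι → ℝ) (z : ι → κ → ℝ) : Matrix κ κ ℝ :=
  ∑ i, a i • vecMulVec (z i) (z i)

theorem isSymmetric_toEuclideanLin_weightedOuterSum (a : ι → ℝ) (z : ι → κ → ℝ) :
    (toEuclideanLin (weightedOuterSum a z)).IsSymmetric := by
  refine isSymmetric_toEuclideanLin_iff.2 (IsHermitian.ext fun p q => ?_)
  simp [weightedOuterSum, Matrix.sum_apply, vecMulVec_apply, mul_comm]

theorem contDiff_toEuclideanCLM_weightedOuterSum (a : ι → ℝ) {k : WithTop ℕ∞} :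
    ContDiff ℝ k fun z : ι → κ → ℝ => toEuclideanCLM (𝕜 := ℝ) (weightedOuterSum a z) := by
  refine contDiff_clm_apply_iff.2 fun y => (contDiff_piLp 2).2 fun p => ?_
  simp only [ofLp_toEuclideanCLM, weightedOuterSum, mulVec, dotProduct, Matrix.sum_apply,
    Matrix.smul_apply, vecMulVec_apply, smul_eq_mul]
  fun_prop

end WeightedOuterSum

section EigenvalueTuples

variable {ι κ ν : Type*} [Fintype ι] [Fintype κ] [DecidableEq κ] [Fintype ν] [DecidableEq ν]

/-- `z` is uncurried to a point of `ι × κ → ℝ` so that the covering lemmas above apply to it. -/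
noncomputable def eigenvalueTuples (A : ι → ν → ℝ) (z : ι × κ → ℝ) : Finset (ν → ℝ) :=
  Fintype.piFinset fun j => univ.image
    ((isSymmetric_toEuclideanLin_weightedOuterSum (A · j) (Function.curry z)).eigenvalues
      finrank_euclideanSpace)

theorem mem_eigenvalueTuples {A : ι → ν → ℝ} {z : ι × κ → ℝ} {y : ν → ℝ} :
    y ∈ eigenvalueTuples A z ↔ ∀ j, ∃ k,
      (isSymmetric_toEuclideanLin_weightedOuterSum (A · j) (Function.curry z)).eigenvalues
        finrank_euclideanSpace k = y j := by
  simp [eigenvalueTuples]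

theorem card_eigenvalueTuples_le (A : ι → ν → ℝ) (z : ι × κ → ℝ) :
    #(eigenvalueTuples A z) ≤ Fintype.card κ ^ Fintype.card ν := by
  calc #(eigenvalueTuples A z) ≤ ∏ _j : ν, Fintype.card κ := by
        rw [eigenvalueTuples, Fintype.card_piFinset]
        exact prod_le_prod' fun j _ => card_image_le.trans (by simp)
    _ = Fintype.card κ ^ Fintype.card ν := by simp

theorem exists_forall_mem_eigenvalueTuples_dist_le (A : ι → ν → ℝ) (R : ℝ) :
    ∃ L : ℝ≥0, ∀ z ∈ closedBall (0 : ι × κ → ℝ) R, ∀ w ∈ closedBall (0 : ι × κ → ℝ) R,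
      ∀ y ∈ eigenvalueTuples A z, ∃ p ∈ eigenvalueTuples A w, dist y p ≤ L * dist z w := by
  set Φ : (ι × κ → ℝ) → ν → (EuclideanSpace ℝ κ →L[ℝ] EuclideanSpace ℝ κ) :=
    fun z j => toEuclideanCLM (𝕜 := ℝ) (weightedOuterSum (A · j) (Function.curry z))
  have hΦ : ContDiff ℝ 1 Φ := contDiff_pi.2 fun j =>
    (contDiff_toEuclideanCLM_weightedOuterSum _).comp
      (by fun_prop : ContDiff ℝ 1 fun (z : ι × κ → ℝ) i p => z (i, p))
  obtain ⟨L, hL⟩ := hΦ.locallyLipschitz.locallyLipschitzOn.exists_lipschitzOnWith_of_compact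
    (isCompact_closedBall 0 R)
  refine ⟨L, fun z hz w hw y hy => ?_⟩
  have hnear : ∀ j, ∃ k, dist (y j) ((isSymmetric_toEuclideanLin_weightedOuterSum (A · j)
      (Function.curry w)).eigenvalues finrank_euclideanSpace k) ≤ L * dist z w := by
    intro j
    obtain ⟨k, hk⟩ := mem_eigenvalueTuples.1 hy j
    have hyj : End.HasEigenvalue (Φ z j : EuclideanSpace ℝ κ →ₗ[ℝ] EuclideanSpace ℝ κ) (y j) :=
      hk ▸ LinearMap.IsSymmetric.hasEigenvalue_eigenvalues _ _ k
    obtain ⟨k', hk'⟩ := LinearMap.IsSymmetric.exists_norm_sub_eigenvalues_le_of_hasEigenvalue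
      (T := Φ w j) (isSymmetric_toEuclideanLin_weightedOuterSum _ _) finrank_euclideanSpace hyj
    refine ⟨k', hk'.trans ?_⟩
    calc ‖Φ z j - Φ w j‖ ≤ dist (Φ z) (Φ w) := by
          rw [dist_eq_norm]; exact norm_le_pi_norm (Φ z - Φ w) j
      _ ≤ L * dist z w := hL.dist_le_mul z hz w hw
  choose k hk using hnear
  exact ⟨_, mem_eigenvalueTuples.2 fun j => ⟨k j, rfl⟩, (dist_pi_le_iff (by positivity)).2 hk⟩

theorem uncurry_mem_eigenvalueTuples_of_det_eq_zero {A : ι → ν → ℝ} {z : ι → κ → ℝ}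
    {y : ν → ℝ} (h : ∀ j, (y j • 1 - weightedOuterSum (A · j) z).det = 0) :
    y ∈ eigenvalueTuples A (Function.uncurry z) := by
  refine mem_eigenvalueTuples.2 fun j => ?_
  rw [Function.curry_uncurry]
  exact LinearMap.IsSymmetric.exists_eigenvalues_eq _ _
    (hasEigenvalue_toEuclideanLin_of_det_eq_zero (h j))

end EigenvalueTuples

theorem exists_null_set_one_matrix_nonsingular_rankOne_general {n m d : ℕ} (hm : d * n < m)
    (A : Fin n → Fin m → ℝ) :
    ∃ 𝒞 : Set (Fin m → ℝ), volume 𝒞 = 0 ∧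
      ∀ lam : Fin m → ℝ, lam ∉ 𝒞 →
        ∀ z : Fin n → (Fin d → ℝ),
          ∃ j, (-(∑ i, A i j • Matrix.vecMulVec (z i) (z i))
            + lam j • (1 : Matrix (Fin d) (Fin d) ℝ)).det ≠ 0 := by
  refine ⟨⋃ z : Fin n × Fin d → ℝ, (eigenvalueTuples A z : Set (Fin m → ℝ)), ?_,
    fun lam hlam z => ?_⟩
  · exact volume_iUnion_eq_zero_of_locallyLipschitz_multifunction (by simpa [mul_comm] using hm)
      _ _ (card_eigenvalueTuples_le A) fun R => exists_forall_mem_eigenvalueTuples_dist_le A R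
  · by_contra! hdet
    refine hlam (Set.mem_iUnion.2 ⟨Function.uncurry z,
      uncurry_mem_eigenvalueTuples_of_det_eq_zero fun j => ?_⟩)
    rw [← hdet j, neg_add_eq_sub]
    rfl

/-- Let `𝒜 ⊆ ℝ` be finite and `m > d n`. For each fixed `A ∈ 𝒜^{n×m}` there is a
Lebesgue-null set `𝒞(A) ⊆ ℝᵐ` such that for every `λ ∉ 𝒞(A)` and every choice of
vectors `z_1,…,z_n ∈ ℝᵈ`, at least one of the matrices
`M_j = -∑_i z_i z_iᵀ A_{ij} + λ_j I_d` is nonsingular. -/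
theorem exists_null_set_one_matrix_nonsingular_rankOne {n m d : ℕ} (hm : d * n < m)
    (𝒜 : Finset ℝ) (A : Fin n → Fin m → ℝ) (hA : ∀ i j, A i j ∈ 𝒜) :
    ∃ 𝒞 : Set (Fin m → ℝ), volume 𝒞 = 0 ∧
      ∀ lam : Fin m → ℝ, lam ∉ 𝒞 →
        ∀ z : Fin n → (Fin d → ℝ),
          ∃ j, (-(∑ i, A i j • Matrix.vecMulVec (z i) (z i))
            + lam j • (1 : Matrix (Fin d) (Fin d) ℝ)).det ≠ 0 :=
  exists_null_set_one_matrix_nonsingular_rankOne_general hm A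
end

section
/- Given distinct real numbers z_1 < z_2 < ⋯ < z_n and labels y_1,…,y_n ∈ {−1,1}, there exist coefficients α_1,…,α_n ∈ ℝ and knots t_1 < t_2 < ⋯ < t_n with t_k < z_k such that the function q(z) = Σ_{k=1}^n α_k (max(z − t_k, 0))² satisfies y_k q(z_k) > 0 for every k ∈ [n]. -/
open Finset

/-- Given strictly increasing reals `z_1 < ⋯ < z_n` and labels `y_k ∈ {-1,1}`, there
are coefficients `α` and strictly increasing knots `t_1 < ⋯ < t_n` with `t_k < z_k`
such that `q(z) = ∑_k α_k (max(z - t_k, 0))²` satisfies `y_k q(z_k) > 0` for all `k`. -/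
theorem requ_interpolation_1d {n : ℕ} (z : Fin n → ℝ) (hz : StrictMono z)
    (y : Fin n → ℝ) (hy : ∀ k, y k = 1 ∨ y k = -1) :
    ∃ (α t : Fin n → ℝ), StrictMono t ∧ (∀ k, t k < z k) ∧
      ∀ k, y k * (∑ j, α j * (max (z k - t j) 0) ^ 2) > 0 := by
  -- find a gap ε > 0 with ε ≤ z j - z i for all i < j
  obtain ⟨ε, hε, hgap⟩ : ∃ ε > 0, ∀ i j : Fin n, i < j → ε ≤ z j - z i := by
    set F := Finset.univ.filter (fun p : Fin n × Fin n => p.1 < p.2) with hF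
    by_cases hne : F.Nonempty
    · refine ⟨F.inf' hne (fun p => z p.2 - z p.1), ?_, ?_⟩
      · rw [gt_iff_lt, Finset.lt_inf'_iff]
        intro p hp
        have : p.1 < p.2 := (Finset.mem_filter.mp hp).2
        linarith [hz this]
      · intro i j hij
        exact Finset.inf'_le _ (show (i, j) ∈ F from Finset.mem_filter.mpr ⟨Finset.mem_univ _, hij⟩)
    · refine ⟨1, one_pos, fun i j hij => absurd ⟨(i, j), ?_⟩ hne⟩
      exact Finset.mem_filter.mpr ⟨Finset.mem_univ _, hij⟩
  set t : Fin n → ℝ := fun j => z j - ε / 2 with ht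
  have htlt : ∀ k, t k < z k := fun k => by simp [ht]; linarith
  have htm : StrictMono t := fun i j hij => by simp [ht]; linarith [hz hij]
  -- matrix
  set M : Matrix (Fin n) (Fin n) ℝ := fun k j => (max (z k - t j) 0) ^ 2 with hM
  have hzero : ∀ k j : Fin n, k < j → M k j = 0 := by
    intro k j hkj
    have h1 : ε ≤ z j - z k := hgap k j hkj
    have : z k - t j ≤ 0 := by simp [ht]; linarith
    simp [hM, max_eq_right this]
  have hdiag : ∀ k, M k k = (ε / 2) ^ 2 := by
    intro k
    have : z k - t k = ε / 2 := by simp [ht]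
    rw [hM]
    simp only [this]
    rw [max_eq_left (by linarith)]
  have htri : M.BlockTriangular OrderDual.toDual := by
    intro i j hij
    exact hzero i j hij
  have hdet : M.det ≠ 0 := by
    rw [Matrix.det_of_lowerTriangular M htri]
    refine Finset.prod_ne_zero_iff.mpr fun k _ => ?_
    rw [hdiag k]
    positivity
  -- solve M α = y
  refine ⟨M⁻¹.mulVec y, t, htm, htlt, fun k => ?_⟩
  have hsol : M.mulVec (M⁻¹.mulVec y) = y := by
    rw [Matrix.mulVec_mulVec, Matrix.mul_nonsing_inv M (isUnit_iff_ne_zero.mpr hdet), Matrix.one_mulVec]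
  have hk : ∑ j, M⁻¹.mulVec y j * (max (z k - t j) 0) ^ 2 = y k := by
    have := congrFun hsol k
    rw [Matrix.mulVec, dotProduct] at this
    rw [← this]
    exact Finset.sum_congr rfl fun j _ => (mul_comm _ _)
  rw [hk]
  rcases hy k with h | h <;> rw [h] <;> norm_num
end

section
/- Given a dataset {(x_i, y_i)}_{i=1}^n ⊂ ℝᵈ × {−1,1} with all x_i distinct, there exists a single-hidden-layer ReQU network p(x) = Σ_{j=1}^{n+1} α_j (ω_jᵀ x + β_j)₊² such that y_i p(x_i) > 0 for all i ∈ [n]. -/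
open Finset

lemma exists_inj_dir {n d : ℕ} (x : Fin n → (Fin d → ℝ)) (hx : ∀ i j, i ≠ j → x i ≠ x j) :
    ∃ ω : Fin d → ℝ, Function.Injective (fun i => ∑ t, ω t * x i t) := by
  by_contra h
  push_neg at h
  have h : ∀ ω : Fin d → ℝ, ∃ a b : Fin n, (∑ t, ω t * x a t) = (∑ t, ω t * x b t) ∧ a ≠ b := by
    intro ω
    have h' := h ω
    rw [Function.Injective] at h'
    push_neg at h'
    exact h'
  set L : {p : Fin n × Fin n // p.1 ≠ p.2} → ((Fin d → ℝ) →ₗ[ℝ] ℝ) :=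
    fun q => ∑ t, (x q.1.1 t - x q.1.2 t) • (LinearMap.proj t : (Fin d → ℝ) →ₗ[ℝ] ℝ) with hL
  have hLapp : ∀ q ω, L q ω = ∑ t, (x q.1.1 t - x q.1.2 t) * ω t := by
    intro q ω
    simp [hL, LinearMap.sum_apply, smul_eq_mul]
  have hcov : ⋃ q, ((LinearMap.ker (L q) : Submodule ℝ (Fin d → ℝ)) : Set (Fin d → ℝ))
      = Set.univ := by
    ext ω
    simp only [Set.mem_iUnion, Set.mem_univ, iff_true, SetLike.mem_coe, LinearMap.mem_ker]
    obtain ⟨a, b, hab, hne⟩ := h ω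
    refine ⟨⟨(a, b), hne⟩, ?_⟩
    rw [hLapp]
    have : ∑ t, (x a t - x b t) * ω t = (∑ t, ω t * x a t) - ∑ t, ω t * x b t := by
      rw [← Finset.sum_sub_distrib]; congr 1; ext t; ring
    rw [this, hab, sub_self]
  obtain ⟨q, hq⟩ := Subspace.exists_eq_top_of_iUnion_eq_univ hcov
  have hv : x q.1.1 ≠ x q.1.2 := hx _ _ q.2
  obtain ⟨t, ht⟩ : ∃ t, x q.1.1 t - x q.1.2 t ≠ 0 := by
    by_contra hc
    push_neg at hc
    exact hv (funext fun t => by linarith [hc t])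
  have : L q (Pi.single t 1) = 0 := by
    have := LinearMap.ker_eq_top.mp (by rw [hq])
    simp [this]
  rw [hLapp] at this
  simp only [Pi.single_apply, mul_ite, mul_one, mul_zero] at this
  rw [Finset.sum_ite_eq' _ t] at this
  simp at this
  exact ht this

lemma exists_requ_interp_1d {n : ℕ} (z : Fin n → ℝ) (hz : Function.Injective z)
    (y : Fin n → ℝ) :
    ∃ (a b : Fin n → ℝ), ∀ i, ∑ j, a j * (max (z i - b j) 0) ^ 2 = y i := by
  set σ := Tuple.sort z with hσ
  set w := z ∘ σ with hwdef
  have hw : StrictMono w :=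
    (Tuple.monotone_sort z).strictMono_of_injective (hz.comp σ.injective)
  set b : Fin n → ℝ := fun j =>
    if h : (j : ℕ) = 0 then w j - 1 else (w ⟨(j : ℕ) - 1, by omega⟩ + w j) / 2 with hb
  have hbw : ∀ j, b j < w j := by
    intro j
    rw [hb]
    by_cases h : (j : ℕ) = 0
    · simp only [dif_pos h]; linarith
    · simp only [h, dif_neg, not_false_iff]
      have : w ⟨(j : ℕ) - 1, by omega⟩ < w j := hw (by simp [Fin.lt_def]; omega)
      linarith
  have hwb : ∀ i j : Fin n, i < j → w i ≤ b j := by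
    intro i j hij
    have hj : (j : ℕ) ≠ 0 := by omega
    rw [hb]
    simp only [dif_neg hj]
    have h1 : w i ≤ w ⟨(j : ℕ) - 1, by omega⟩ := hw.monotone (by simp [Fin.le_def]; omega)
    have h2 : w ⟨(j : ℕ) - 1, by omega⟩ < w j := hw (by simp [Fin.lt_def]; omega)
    linarith
  set M : Matrix (Fin n) (Fin n) ℝ := fun i j => (max (w i - b j) 0) ^ 2 with hM
  have htri : M.BlockTriangular OrderDual.toDual := by
    intro i j hij
    have hij' : i < j := hij
    have : max (w i - b j) 0 = 0 := max_eq_right (by linarith [hwb i j hij'])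
    simp [hM, this]
  have hdet : M.det ≠ 0 := by
    rw [Matrix.det_of_lowerTriangular M htri]
    refine Finset.prod_ne_zero_iff.mpr fun i _ => ?_
    have h1 : max (w i - b i) 0 = w i - b i := max_eq_left (by linarith [hbw i])
    simp only [hM, h1]
    exact pow_ne_zero _ (by linarith [hbw i])
  have hdet' : IsUnit M.det := isUnit_iff_ne_zero.mpr hdet
  set a : Fin n → ℝ := M⁻¹.mulVec (y ∘ σ) with ha
  have hsolve : M.mulVec a = y ∘ σ := by
    rw [ha, Matrix.mulVec_mulVec, Matrix.mul_nonsing_inv M hdet', Matrix.one_mulVec]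
  refine ⟨a, b, fun i => ?_⟩
  have key : ∑ j, a j * (max (z i - b j) 0) ^ 2 = (M.mulVec a) (σ.symm i) := by
    rw [Matrix.mulVec]
    simp only [dotProduct, hM]
    congr 1; ext j
    have : w (σ.symm i) = z i := by simp [hwdef]
    rw [this]; ring
  rw [key, hsolve]
  simp

/-- Given a dataset with pairwise distinct feature vectors `x_i ∈ ℝᵈ` and labels
`y_i ∈ {-1,1}`, there is a single-hidden-layer ReQU network with `n + 1` neurons,
`p(x) = ∑_j α_j (ω_jᵀ x + β_j)₊²`, such that `y_i p(x_i) > 0` for all `i`. -/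
theorem requ_network_interpolation {n d : ℕ}
    (x : Fin n → (Fin d → ℝ)) (hx : ∀ i j, i ≠ j → x i ≠ x j)
    (y : Fin n → ℝ) (hy : ∀ i, y i = 1 ∨ y i = -1) :
    ∃ (α β : Fin (n + 1) → ℝ) (ω : Fin (n + 1) → (Fin d → ℝ)),
      ∀ i, y i * (∑ j, α j * (max (∑ t, ω j t * x i t + β j) 0) ^ 2) > 0 := by
  obtain ⟨ω₀, hω₀⟩ := exists_inj_dir x hx
  obtain ⟨a, b, hab⟩ := exists_requ_interp_1d (fun i => ∑ t, ω₀ t * x i t) hω₀ y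
  refine ⟨Fin.snoc a 0, Fin.snoc (fun j => -b j) 0, fun _ => ω₀, fun i => ?_⟩
  have : ∑ j : Fin (n + 1), (Fin.snoc a 0 : Fin (n+1) → ℝ) j *
      (max (∑ t, ω₀ t * x i t + (Fin.snoc (fun j => -b j) 0 : Fin (n+1) → ℝ) j) 0) ^ 2
      = y i := by
    rw [Fin.sum_univ_castSucc]
    simp only [Fin.snoc_castSucc, Fin.snoc_last, zero_mul, add_zero]
    have := hab i
    simp only [sub_eq_add_neg] at this
    exact this
  rw [this]
  rcases hy i with h | h <;> rw [h] <;> norm_num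
end
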